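/- In the Set Cover fitness graph, let X₁ ⊆ V be any configuration for which there exists a node v ∈ V₂∖X₁ such that v ∉ A for every A ∈ X₁∩V₁ (i.e., a resident element of the universe not covered by any mutant set-node). Then the probability that the Heterogeneous Moran process started at X₁ ever reaches a configuration X₂ with X₂∩V₁ = ∅ is at least ((1/n)/((1/n)+(n−1)·y))^{|V₁|}. -/

import Mathlib

open Finset
open scoped Classical

/-- A fitness graph: a finite strongly connected weighted directed graph together with
mutant and resident fitness functions. `w u v > 0` encodes that `(u,v)` is an edge
of non-zero weight; `w u ·` is a probability distribution. -/
structure FitnessGraph (V : Type) [Fintype V] [DecidableEq V] where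
  w : V → V → ℝ
  m : V → ℝ
  r : V → ℝ
  w_nonneg : ∀ u v, 0 ≤ w u v
  w_rowsum : ∀ u, ∑ v, w u v = 1
  strongly_connected : ∀ u v : V, Relation.ReflTransGen (fun a b => 0 < w a b) u v
  m_pos : ∀ u, 0 < m u
  r_pos : ∀ u, 0 < r u

variable {V : Type} [Fintype V] [DecidableEq V]

/-- A fitness graph is mutant-biased if `m(u) ≥ r(u)` for every node `u`. -/
def FitnessGraph.MutantBiased (G : FitnessGraph V) : Prop :=
  ∀ u, G.r u ≤ G.m u

/-- The (out-)degree of a node: the number of neighbors along edges of non-zero weight. -/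
noncomputable def FitnessGraph.deg (G : FitnessGraph V) (u : V) : ℕ :=
  (Finset.univ.filter fun v => 0 < G.w u v).card

/-- A fitness graph is undirected if its edge relation is symmetric and the weights
are uniform: `w(u,v) = 1/d(u)` for every edge `(u,v)`. -/
def FitnessGraph.Undirected (G : FitnessGraph V) : Prop :=
  (∀ u v, 0 < G.w u v → 0 < G.w v u) ∧
  ∀ u v, 0 < G.w u v → G.w u v = 1 / (G.deg u : ℝ)

/-- The fitness of node `u` in configuration `X`: `m(u)` if `u` is a mutant, `r(u)` otherwise. -/
def FitnessGraph.fit (G : FitnessGraph V) (X : Finset V) (u : V) : ℝ :=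
  if u ∈ X then G.m u else G.r u

/-- Total population fitness in configuration `X`. -/
def FitnessGraph.totalFit (G : FitnessGraph V) (X : Finset V) : ℝ :=
  ∑ u, G.fit X u

/-- The configuration resulting from `X` when `u` reproduces and replaces `v`. -/
def moranNext (X : Finset V) (u v : V) : Finset V :=
  if u ∈ X then insert v X else X.erase v

/-- One-step transition probability of the Heterogeneous Moran process. -/
noncomputable def FitnessGraph.step (G : FitnessGraph V) (X Y : Finset V) : ℝ :=
  ∑ u, ∑ v, (G.fit X u / G.totalFit X) * G.w u v * (if moranNext X u v = Y then 1 else 0)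

/-- `t`-step transition probability of the Heterogeneous Moran process. -/
noncomputable def FitnessGraph.stepN (G : FitnessGraph V) : ℕ → Finset V → Finset V → ℝ
  | 0, X, Y => if X = Y then 1 else 0
  | t + 1, X, Y => ∑ Z, FitnessGraph.stepN G t X Z * G.step Z Y

/-- Fixation probability: the probability that, started from seed set `S`, the process
eventually reaches the all-mutant configuration `V`; since `V` is absorbing this equals
`⨆ t, P(X_t = V)`. -/
noncomputable def FitnessGraph.fp (G : FitnessGraph V) (S : Finset V) : ℝ :=
  ⨆ t : ℕ, G.stepN t S Finset.univ

/-- One-step transition probability of the Moran process stopped upon reaching the set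
of configurations `A` (configurations in `A` are made absorbing). -/
noncomputable def stopStep (G : FitnessGraph V) (A : Set (Finset V)) (X Y : Finset V) : ℝ :=
  if X ∈ A then (if Y = X then 1 else 0) else G.step X Y

/-- `t`-step transition probability of the stopped process. -/
noncomputable def stopStepN (G : FitnessGraph V) (A : Set (Finset V)) :
    ℕ → Finset V → Finset V → ℝ
  | 0, X, Y => if X = Y then 1 else 0
  | t + 1, X, Y => ∑ Z, stopStepN G A t X Z * stopStep G A Z Y

/-- The probability that the Heterogeneous Moran process started at `X0` ever reaches a
configuration in `A`: the supremum over `t` of the probability that the process stopped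
at `A` is in `A` at time `t`. -/
noncomputable def reachProb (G : FitnessGraph V) (A : Set (Finset V)) (X0 : Finset V) : ℝ :=
  ⨆ t : ℕ, ∑ Y ∈ Finset.univ.filter (fun Y => Y ∈ A), stopStepN G A t X0 Y

/-- The Set Cover fitness graph for an instance `(U, 𝒮)` with parameters `x ≥ 1` and
`0 < y ≤ 1`: the vertex set is `V₁ ⊔ V₂` with `V₁ = 𝒮`, `V₂ = U`; there is an edge from
`A ∈ V₁` to each `e ∈ A` and all edges from `V₂` to `V₁`, with uniform weights;
residents have fitness `1` everywhere, mutants have fitness `x` on `V₁` and `y` on `V₂`. -/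
def IsSetCoverGraph {U : Type} [Fintype U] [DecidableEq U] (𝒮 : Finset (Finset U))
    (x y : ℝ) (G : FitnessGraph ({A // A ∈ 𝒮} ⊕ U)) : Prop :=
  (∀ (A : {A // A ∈ 𝒮}) (e : U),
      G.w (Sum.inl A) (Sum.inr e) = if e ∈ A.1 then 1 / (A.1.card : ℝ) else 0) ∧
  (∀ A B : {A // A ∈ 𝒮}, G.w (Sum.inl A) (Sum.inl B) = 0) ∧
  (∀ (e : U) (A : {A // A ∈ 𝒮}), G.w (Sum.inr e) (Sum.inl A) = 1 / (𝒮.card : ℝ)) ∧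
  (∀ e e' : U, G.w (Sum.inr e) (Sum.inr e') = 0) ∧
  (∀ A : {A // A ∈ 𝒮}, G.m (Sum.inl A) = x) ∧
  (∀ e : U, G.m (Sum.inr e) = y) ∧
  (∀ u : {A // A ∈ 𝒮} ⊕ U, G.r u = 1)


/-!
Call a configuration uncovered if `v` is resident and lies in no mutant set, and let `k` be its
number of mutant sets. The potential `g = ρ ^ k` on uncovered configurations (`0` elsewhere), with
`ρ` the ratio in the bound, is subharmonic for the Moran step outside the target: set nodes
reproducing never change it, a resident element replacing a mutant set raises it, and `ρ` is
chosen so that the gain from `v` alone outweighs the loss caused by all mutant elements. From an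
uncovered configuration the target is reached with positive probability within `|𝒮|` steps
(`v` replaces the mutant sets one by one), so the mass where `g (X_t) > 0` is eventually
absorbed, and optional stopping bounds the probability of reaching the target below by
`g X₁ ≥ ρ ^ |𝒮|`.
-/

namespace FitnessGraph

variable (G : FitnessGraph V)

lemma fit_pos (X : Finset V) (u : V) : 0 < G.fit X u := by
  unfold fit
  split_ifs
  exacts [G.m_pos u, G.r_pos u]

lemma totalFit_pos [Nonempty V] (X : Finset V) : 0 < G.totalFit X :=
  Finset.sum_pos (fun u _ => G.fit_pos X u) univ_nonempty

lemma fit_div_mul_w_nonneg (X : Finset V) (u v : V) :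
    0 ≤ G.fit X u / G.totalFit X * G.w u v :=
  mul_nonneg (div_nonneg (G.fit_pos X u).le (sum_nonneg fun w _ => (G.fit_pos X w).le))
    (G.w_nonneg u v)

lemma step_nonneg (X Y : Finset V) : 0 ≤ G.step X Y :=
  sum_nonneg fun u _ => sum_nonneg fun v _ =>
    mul_nonneg (G.fit_div_mul_w_nonneg X u v) (by positivity)

lemma sum_step_mul (X : Finset V) (h : Finset V → ℝ) :
    ∑ Y, G.step X Y * h Y =
      ∑ u, ∑ v, G.fit X u / G.totalFit X * G.w u v * h (moranNext X u v) := by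
  simp only [step, sum_mul]
  rw [sum_comm]
  refine sum_congr rfl fun u _ => ?_
  rw [sum_comm]
  simp [mul_ite, ite_mul]

lemma sum_fit_div_mul_w [Nonempty V] (X : Finset V) :
    ∑ u, ∑ v, G.fit X u / G.totalFit X * G.w u v = 1 := by
  simp_rw [← mul_sum, G.w_rowsum, mul_one, ← sum_div]
  exact div_self (G.totalFit_pos X).ne'

lemma sum_step [Nonempty V] (X : Finset V) : ∑ Y, G.step X Y = 1 := by
  have := G.sum_step_mul X fun _ => 1
  simp only [mul_one] at this
  rw [this, G.sum_fit_div_mul_w]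

noncomputable def drift (h : Finset V → ℝ) (X : Finset V) (u : V) : ℝ :=
  ∑ v, G.w u v * (h (moranNext X u v) - h X)

lemma sum_step_mul_sub_self [Nonempty V] (X : Finset V) (h : Finset V → ℝ) :
    ∑ Y, G.step X Y * h Y - h X =
      (∑ u, G.fit X u * G.drift h X u) / G.totalFit X := by
  conv_lhs =>
    rw [sum_step_mul, ← one_mul (h X), ← G.sum_fit_div_mul_w X, sum_mul, ← sum_sub_distrib]
  rw [sum_div]
  refine sum_congr rfl fun u _ => ?_
  rw [sum_mul, ← sum_sub_distrib, drift, mul_sum, sum_div]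
  exact sum_congr rfl fun v _ => by ring

lemma fit_div_mul_w_le_step (X : Finset V) (u v : V) :
    G.fit X u / G.totalFit X * G.w u v ≤ G.step X (moranNext X u v) := by
  have hnonneg : ∀ u' v', 0 ≤ G.fit X u' / G.totalFit X * G.w u' v' *
      (if moranNext X u' v' = moranNext X u v then 1 else 0) := fun u' v' =>
    mul_nonneg (G.fit_div_mul_w_nonneg X u' v') (by positivity)
  calc G.fit X u / G.totalFit X * G.w u v
      = G.fit X u / G.totalFit X * G.w u v *
          (if moranNext X u v = moranNext X u v then 1 else 0) := by simp
    _ ≤ ∑ v', G.fit X u / G.totalFit X * G.w u v' *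
          (if moranNext X u v' = moranNext X u v then 1 else 0) :=
        single_le_sum (fun v' _ => hnonneg u v') (mem_univ v)
    _ ≤ G.step X (moranNext X u v) :=
        single_le_sum (f := fun u' => ∑ v', G.fit X u' / G.totalFit X * G.w u' v' *
          (if moranNext X u' v' = moranNext X u v then 1 else 0))
          (fun u' _ => sum_nonneg fun v' _ => hnonneg u' v') (mem_univ u)

end FitnessGraph

section StoppedProcess

variable (G : FitnessGraph V) (A : Set (Finset V))

lemma stopStep_of_notMem {X : Finset V} (hX : X ∉ A) (Y : Finset V) :
    stopStep G A X Y = G.step X Y :=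
  if_neg hX

lemma stopStep_nonneg (X Y : Finset V) : 0 ≤ stopStep G A X Y := by
  unfold stopStep
  split_ifs
  exacts [zero_le_one, le_rfl, G.step_nonneg X Y]

lemma sum_stopStep [Nonempty V] (X : Finset V) : ∑ Y, stopStep G A X Y = 1 := by
  unfold stopStep
  split_ifs
  · simp
  · exact G.sum_step X

lemma stopStepN_nonneg (t : ℕ) (X Y : Finset V) : 0 ≤ stopStepN G A t X Y := by
  induction t generalizing Y with
  | zero => unfold stopStepN; positivity
  | succ t ih => exact sum_nonneg fun Z _ => mul_nonneg (ih Z) (stopStep_nonneg G A Z Y)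

lemma sum_stopStepN [Nonempty V] (t : ℕ) (X : Finset V) : ∑ Y, stopStepN G A t X Y = 1 := by
  induction t with
  | zero => simp [stopStepN]
  | succ t ih =>
    simp only [stopStepN]
    rw [sum_comm]
    simp_rw [← mul_sum, sum_stopStep, mul_one, ih]

lemma stopStepN_add (s t : ℕ) (X Y : Finset V) :
    stopStepN G A (s + t) X Y = ∑ Z, stopStepN G A s X Z * stopStepN G A t Z Y := by
  induction t generalizing Y with
  | zero => simp [stopStepN, mul_ite]
  | succ t ih =>
    change ∑ Z, stopStepN G A (s + t) X Z * stopStep G A Z Y = _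
    simp only [ih, sum_mul, stopStepN, mul_sum]
    rw [sum_comm]
    simp_rw [mul_assoc]

lemma stopStepN_one (X Y : Finset V) : stopStepN G A 1 X Y = stopStep G A X Y := by
  simp [stopStepN, ite_mul, sum_ite_eq]

lemma stopStepN_of_mem {X : Finset V} (hX : X ∈ A) (t : ℕ) (Y : Finset V) :
    stopStepN G A t X Y = if X = Y then 1 else 0 := by
  induction t generalizing Y with
  | zero => rfl
  | succ t ih =>
    simp only [stopStepN, ih, ite_mul, one_mul, zero_mul, sum_ite_eq, mem_univ, if_true, stopStep,
      if_pos hX]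
    by_cases h : X = Y <;> simp [h, eq_comm]

noncomputable def absorbProb (t : ℕ) (X : Finset V) : ℝ :=
  ∑ Y ∈ univ.filter (· ∈ A), stopStepN G A t X Y

lemma absorbProb_nonneg (t : ℕ) (X : Finset V) : 0 ≤ absorbProb G A t X :=
  sum_nonneg fun Y _ => stopStepN_nonneg G A t X Y

lemma absorbProb_le_one [Nonempty V] (t : ℕ) (X : Finset V) : absorbProb G A t X ≤ 1 :=
  (sum_le_sum_of_subset_of_nonneg (filter_subset _ _)
    fun Y _ _ => stopStepN_nonneg G A t X Y).trans (sum_stopStepN G A t X).le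

lemma absorbProb_of_mem {X : Finset V} (hX : X ∈ A) (t : ℕ) : absorbProb G A t X = 1 := by
  simp [absorbProb, stopStepN_of_mem G A hX, hX]

lemma absorbProb_add (s t : ℕ) (X : Finset V) :
    absorbProb G A (s + t) X = ∑ Z, stopStepN G A s X Z * absorbProb G A t Z := by
  simp only [absorbProb, stopStepN_add, mul_sum]
  exact sum_comm

lemma absorbProb_le_reachProb [Nonempty V] (t : ℕ) (X : Finset V) :
    absorbProb G A t X ≤ reachProb G A X :=
  le_ciSup (f := fun t => absorbProb G A t X)
    ⟨1, by rintro _ ⟨s, rfl⟩; exact absorbProb_le_one G A s X⟩ t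

end StoppedProcess

section Subharmonic

variable (G : FitnessGraph V) (A : Set (Finset V)) (h : Finset V → ℝ)

noncomputable def pendingProb (t : ℕ) (X : Finset V) : ℝ :=
  ∑ Y ∈ univ.filter (fun Y => Y ∉ A ∧ 0 < h Y), stopStepN G A t X Y

lemma le_sum_stopStepN_mul (hsub : ∀ Z ∉ A, h Z ≤ ∑ Y, G.step Z Y * h Y) (t : ℕ)
    (X : Finset V) : h X ≤ ∑ Y, stopStepN G A t X Y * h Y := by
  have hstop : ∀ Z, h Z ≤ ∑ Y, stopStep G A Z Y * h Y := by
    intro Z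
    by_cases hZ : Z ∈ A
    · simp [stopStep, hZ]
    · simpa only [stopStep_of_notMem G A hZ] using hsub Z hZ
  induction t with
  | zero => simp [stopStepN]
  | succ t ih =>
    calc h X ≤ ∑ Z, stopStepN G A t X Z * h Z := ih
      _ ≤ ∑ Z, stopStepN G A t X Z * ∑ Y, stopStep G A Z Y * h Y :=
        sum_le_sum fun Z _ => mul_le_mul_of_nonneg_left (hstop Z) (stopStepN_nonneg G A t X Z)
      _ = ∑ Y, stopStepN G A (t + 1) X Y * h Y := by
        simp only [stopStepN, mul_sum, sum_mul, mul_assoc]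
        exact sum_comm

lemma sum_stopStepN_mul_le (h_le_one : ∀ Z, h Z ≤ 1) (t : ℕ) (X : Finset V) :
    ∑ Y, stopStepN G A t X Y * h Y ≤ absorbProb G A t X + pendingProb G A h t X := by
  rw [absorbProb, pendingProb, sum_filter, sum_filter, ← sum_add_distrib]
  refine sum_le_sum fun Y _ => ?_
  have hq := stopStepN_nonneg G A t X Y
  by_cases hY : Y ∈ A
  · simpa [hY] using mul_le_of_le_one_right hq (h_le_one Y)
  · by_cases hhY : 0 < h Y
    · simpa [hY, hhY] using mul_le_of_le_one_right hq (h_le_one Y)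
    · simpa [hY, hhY] using mul_nonpos_of_nonneg_of_nonpos hq (not_lt.1 hhY)

lemma absorbProb_add_mul_pendingProb_le {N : ℕ} {δ : ℝ}
    (habs : ∀ Z ∉ A, 0 < h Z → δ ≤ absorbProb G A N Z) (t : ℕ) (X : Finset V) :
    absorbProb G A t X + δ * pendingProb G A h t X ≤ absorbProb G A (t + N) X := by
  rw [absorbProb_add, absorbProb, pendingProb, sum_filter, sum_filter, mul_sum,
    ← sum_add_distrib]
  refine sum_le_sum fun Z _ => ?_
  have hq := stopStepN_nonneg G A t X Z
  by_cases hZ : Z ∈ A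
  · simp [hZ, absorbProb_of_mem G A hZ]
  · by_cases hhZ : 0 < h Z
    · simpa [hZ, hhZ, mul_comm δ] using mul_le_mul_of_nonneg_left (habs Z hZ hhZ) hq
    · simpa [hZ, hhZ] using mul_nonneg hq (absorbProb_nonneg G A N Z)

/-- The mass on `{h > 0} \ A` is absorbed at a uniform rate every `N` steps, so it cannot stay
bounded below; since `h X ≤ absorbProb + pendingProb` at all times, `h X ≤ reachProb`. -/
theorem le_reachProb_of_subharmonic [Nonempty V] (h_le_one : ∀ Z, h Z ≤ 1)
    (hsub : ∀ Z ∉ A, h Z ≤ ∑ Y, G.step Z Y * h Y) {N : ℕ}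
    (habs : ∀ Z ∉ A, 0 < h Z → 0 < absorbProb G A N Z) (X : Finset V) :
    h X ≤ reachProb G A X := by
  obtain ⟨δ, hδ, hδle⟩ : ∃ δ > 0, ∀ Z ∉ A, 0 < h Z → δ ≤ absorbProb G A N Z := by
    set s := univ.filter fun Z => Z ∉ A ∧ 0 < h Z
    rcases s.eq_empty_or_nonempty with hs | hs
    · exact ⟨1, one_pos, fun Z hZ hhZ => absurd (mem_filter.2 ⟨mem_univ Z, hZ, hhZ⟩)
        (hs ▸ notMem_empty Z)⟩
    obtain ⟨Z₀, hZ₀, hmin⟩ := s.exists_min_image (absorbProb G A N) hs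
    obtain ⟨-, hZ₀A, hhZ₀⟩ := mem_filter.1 hZ₀
    exact ⟨_, habs Z₀ hZ₀A hhZ₀, fun Z hZ hhZ => hmin Z (mem_filter.2 ⟨mem_univ Z, hZ, hhZ⟩)⟩
  by_contra! hlt
  have hpending : ∀ t, h X - reachProb G A X ≤ pendingProb G A h t X := fun t => by
    have := (le_sum_stopStepN_mul G A h hsub t X).trans
      (sum_stopStepN_mul_le G A h h_le_one t X)
    linarith [absorbProb_le_reachProb G A t X]
  have hgrowth : ∀ K : ℕ, K * (δ * (h X - reachProb G A X)) ≤ absorbProb G A (K * N) X := by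
    intro K
    induction K with
    | zero => simpa using absorbProb_nonneg G A 0 X
    | succ K ih =>
      have := absorbProb_add_mul_pendingProb_le G A h hδle (K * N) X
      have := mul_le_mul_of_nonneg_left (hpending (K * N)) hδ.le
      rw [Nat.succ_mul]
      push_cast
      linarith
  obtain ⟨K, hK⟩ := exists_nat_gt (1 / (δ * (h X - reachProb G A X)))
  rw [div_lt_iff₀ (mul_pos hδ (sub_pos.2 hlt))] at hK
  linarith [hgrowth K, absorbProb_le_one G A (K * N) X]

end Subharmonic

section SetCover

variable {U : Type} {𝒮 : Finset (Finset U)}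

variable (𝒮) in
def noMutantSets : Set (Finset ({A // A ∈ 𝒮} ⊕ U)) :=
  {X | ∀ A : {A // A ∈ 𝒮}, Sum.inl A ∉ X}

def Uncovered (v : U) (Z : Finset ({A // A ∈ 𝒮} ⊕ U)) : Prop :=
  Sum.inr v ∉ Z ∧ ∀ A : {A // A ∈ 𝒮}, Sum.inl A ∈ Z → v ∉ A.1

noncomputable def coverPotential (ρ : ℝ) (v : U) (Z : Finset ({A // A ∈ 𝒮} ⊕ U)) : ℝ :=
  if Uncovered v Z then ρ ^ #Z.toLeft else 0

variable {ρ : ℝ} {v : U} {Z : Finset ({A // A ∈ 𝒮} ⊕ U)}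

lemma notMem_noMutantSets_iff : Z ∉ noMutantSets 𝒮 ↔ Z.toLeft.Nonempty := by
  simp [noMutantSets, Finset.Nonempty]

lemma coverPotential_of_uncovered (hZ : Uncovered v Z) : coverPotential ρ v Z = ρ ^ #Z.toLeft :=
  if_pos hZ

lemma uncovered_of_coverPotential_ne_zero (hZ : coverPotential ρ v Z ≠ 0) : Uncovered v Z := by
  by_contra h
  exact hZ (if_neg h)

lemma coverPotential_nonneg (hρ : 0 ≤ ρ) : 0 ≤ coverPotential ρ v Z := by
  unfold coverPotential
  split_ifs
  exacts [pow_nonneg hρ _, le_rfl]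

lemma coverPotential_le_one (hρ₀ : 0 ≤ ρ) (hρ₁ : ρ ≤ 1) : coverPotential ρ v Z ≤ 1 := by
  unfold coverPotential
  split_ifs
  exacts [pow_le_one₀ hρ₀ hρ₁, zero_le_one]

lemma pow_card_le_coverPotential (hZ : Uncovered v Z) (hρ₀ : 0 ≤ ρ) (hρ₁ : ρ ≤ 1) :
    ρ ^ #𝒮 ≤ coverPotential ρ v Z := by
  rw [coverPotential_of_uncovered hZ]
  refine pow_le_pow_of_le_one hρ₀ hρ₁ ?_
  simpa using card_le_univ Z.toLeft

variable [DecidableEq U]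

lemma Uncovered.erase (hZ : Uncovered v Z) (u : {A // A ∈ 𝒮} ⊕ U) : Uncovered v (Z.erase u) :=
  ⟨fun h => hZ.1 (mem_of_mem_erase h), fun A hA => hZ.2 A (mem_of_mem_erase hA)⟩

/-- When `A` is mutant, `e ≠ v` because `v` lies in no mutant set. -/
lemma coverPotential_moranNext_inl_inr (hZ : Uncovered v Z) {A : {A // A ∈ 𝒮}} {e : U}
    (he : e ∈ A.1) : coverPotential ρ v (moranNext Z (Sum.inl A) (Sum.inr e)) =
      coverPotential ρ v Z := by
  unfold moranNext
  split_ifs with hA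
  · have hev : e ≠ v := fun h => hZ.2 A hA (h ▸ he)
    have hZ' : Uncovered v (insert (Sum.inr e) Z) :=
      ⟨by simpa [hev.symm] using hZ.1, fun B hB => hZ.2 B (by simpa using hB)⟩
    rw [coverPotential_of_uncovered hZ', coverPotential_of_uncovered hZ, toLeft_insert_inr]
  · rw [coverPotential_of_uncovered (hZ.erase _), coverPotential_of_uncovered hZ]
    congr 2
    ext; simp

lemma coverPotential_moranNext_inr_inl_sub (hZ : Uncovered v Z) {e : U} (he : Sum.inr e ∉ Z)
    (B : {A // A ∈ 𝒮}) : coverPotential ρ v (moranNext Z (Sum.inr e) (Sum.inl B)) -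
      coverPotential ρ v Z = if Sum.inl B ∈ Z then ρ ^ (#Z.toLeft - 1) * (1 - ρ) else 0 := by
  rw [moranNext, if_neg he, coverPotential_of_uncovered (hZ.erase _),
    coverPotential_of_uncovered hZ]
  split_ifs with hB
  · have hcard : #(Z.erase (Sum.inl B)).toLeft = #Z.toLeft - 1 := by
      rw [← card_erase_of_mem (mem_toLeft.2 hB)]
      congr 1
      ext; simp
    obtain ⟨k, hk⟩ := Nat.exists_eq_add_one.2 (card_pos.2 ⟨B, mem_toLeft.2 hB⟩)
    rw [hcard, hk, Nat.add_sub_cancel, pow_succ]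
    ring
  · rw [erase_eq_of_notMem hB, sub_self]

end SetCover

namespace IsSetCoverGraph

variable {U : Type} [Fintype U] [DecidableEq U] {𝒮 : Finset (Finset U)} {x y : ℝ}
  {G : FitnessGraph ({A // A ∈ 𝒮} ⊕ U)} {ρ : ℝ} {v : U} {Z : Finset ({A // A ∈ 𝒮} ⊕ U)}

lemma fit_inr (hG : IsSetCoverGraph 𝒮 x y G) (e : U) :
    G.fit Z (Sum.inr e) = if Sum.inr e ∈ Z then y else 1 := by
  obtain ⟨-, -, -, -, -, hm, hr⟩ := hG
  simp only [FitnessGraph.fit, hm, hr]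

lemma sum_w_inr_mul (hG : IsSetCoverGraph 𝒮 x y G) (e : U) (f : {A // A ∈ 𝒮} ⊕ U → ℝ) :
    ∑ u, G.w (Sum.inr e) u * f u = (∑ B, f (Sum.inl B)) / #𝒮 := by
  obtain ⟨-, -, hw, hw', -⟩ := hG
  simp only [Fintype.sum_sum_type, hw, hw', zero_mul, sum_const_zero, add_zero,
    one_div_mul_eq_div, sum_div]

lemma drift_inl_eq_zero (hG : IsSetCoverGraph 𝒮 x y G) (hZ : Uncovered v Z)
    (A : {A // A ∈ 𝒮}) :
    G.drift (coverPotential ρ v) Z (Sum.inl A) = 0 := by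
  obtain ⟨hw, hw', -⟩ := hG
  refine sum_eq_zero fun u _ => ?_
  rcases u with B | e
  · rw [hw', zero_mul]
  · by_cases he : e ∈ A.1
    · rw [coverPotential_moranNext_inl_inr hZ he, sub_self, mul_zero]
    · rw [hw, if_neg he, zero_mul]

lemma neg_le_fit_mul_drift_of_mem (hG : IsSetCoverGraph 𝒮 x y G) (hy : 0 ≤ y) (hρ : 0 ≤ ρ)
    (hZ : Uncovered v Z) (hZA : Z.toLeft.Nonempty) {e : U} (he : Sum.inr e ∈ Z) :
    -(y * ρ ^ #Z.toLeft) ≤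
      G.fit Z (Sum.inr e) * G.drift (coverPotential ρ v) Z (Sum.inr e) := by
  obtain ⟨B₀, -⟩ := hZA
  have h𝒮 : (0 : ℝ) < #𝒮 := by exact_mod_cast card_pos.2 ⟨_, B₀.2⟩
  rw [hG.fit_inr, if_pos he, FitnessGraph.drift, hG.sum_w_inr_mul,
    coverPotential_of_uncovered hZ, ← mul_neg]
  refine mul_le_mul_of_nonneg_left ?_ hy
  rw [le_div_iff₀ h𝒮]
  calc -ρ ^ #Z.toLeft * #𝒮 = ∑ _B : {A // A ∈ 𝒮}, -ρ ^ #Z.toLeft := by simp [mul_comm]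
    _ ≤ _ := sum_le_sum fun B _ => by
      have := coverPotential_nonneg (v := v) (Z := moranNext Z (Sum.inr e) (Sum.inl B)) hρ
      linarith

lemma le_fit_mul_drift_of_notMem (hG : IsSetCoverGraph 𝒮 x y G) (hρ₀ : 0 ≤ ρ) (hρ₁ : ρ ≤ 1)
    (hZ : Uncovered v Z) (hZA : Z.toLeft.Nonempty) {e : U} (he : Sum.inr e ∉ Z) :
    ρ ^ (#Z.toLeft - 1) * (1 - ρ) / #𝒮 ≤
      G.fit Z (Sum.inr e) * G.drift (coverPotential ρ v) Z (Sum.inr e) := by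
  obtain ⟨B₀, hB₀⟩ := hZA
  rw [hG.fit_inr, if_neg he, one_mul, FitnessGraph.drift, hG.sum_w_inr_mul]
  simp_rw [coverPotential_moranNext_inr_inl_sub hZ he]
  refine div_le_div_of_nonneg_right ?_ (Nat.cast_nonneg _)
  have hgain : 0 ≤ ρ ^ (#Z.toLeft - 1) * (1 - ρ) :=
    mul_nonneg (pow_nonneg hρ₀ _) (sub_nonneg.2 hρ₁)
  calc ρ ^ (#Z.toLeft - 1) * (1 - ρ)
      = if Sum.inl B₀ ∈ Z then ρ ^ (#Z.toLeft - 1) * (1 - ρ) else 0 := by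
        rw [if_pos (mem_toLeft.1 hB₀)]
    _ ≤ _ := single_le_sum (f := fun B : {A // A ∈ 𝒮} =>
        if Sum.inl B ∈ Z then ρ ^ (#Z.toLeft - 1) * (1 - ρ) else 0)
        (fun B _ => by split_ifs <;> simp [hgain]) (mem_univ B₀)

lemma neg_le_fit_mul_drift (hG : IsSetCoverGraph 𝒮 x y G) (hy : 0 ≤ y) (hρ₀ : 0 ≤ ρ)
    (hρ₁ : ρ ≤ 1) (hZ : Uncovered v Z) (hZA : Z.toLeft.Nonempty) (e : U) :
    -(y * ρ ^ #Z.toLeft) ≤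
      G.fit Z (Sum.inr e) * G.drift (coverPotential ρ v) Z (Sum.inr e) := by
  by_cases he : Sum.inr e ∈ Z
  · exact hG.neg_le_fit_mul_drift_of_mem hy hρ₀ hZ hZA he
  · have := hG.le_fit_mul_drift_of_notMem hρ₀ hρ₁ hZ hZA (v := v) he
    have : 0 ≤ ρ ^ (#Z.toLeft - 1) * (1 - ρ) / #𝒮 :=
      div_nonneg (mul_nonneg (pow_nonneg hρ₀ _) (sub_nonneg.2 hρ₁)) (Nat.cast_nonneg _)
    have : 0 ≤ y * ρ ^ #Z.toLeft := mul_nonneg hy (pow_nonneg hρ₀ _)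
    linarith

/-- The potential is subharmonic: the gain `ρ ^ (k - 1) * (1 - ρ) / |𝒮|` from `v` replacing a
mutant set outweighs the loss `y * ρ ^ k` from each of the at most `|U| - 1` mutant elements. -/
lemma coverPotential_le_sum_step (hG : IsSetCoverGraph 𝒮 x y G) (hy : 0 ≤ y) (hρ₀ : 0 ≤ ρ)
    (hρ₁ : ρ ≤ 1) (hρ : ((Fintype.card U : ℝ) - 1) * y * ρ * #𝒮 ≤ 1 - ρ)
    (hZA : Z ∉ noMutantSets 𝒮) :
    coverPotential ρ v Z ≤ ∑ Y, G.step Z Y * coverPotential ρ v Y := by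
  have : Nonempty ({A // A ∈ 𝒮} ⊕ U) := ⟨Sum.inr v⟩
  by_cases hZ : Uncovered v Z
  swap
  · rw [coverPotential, if_neg hZ]
    exact sum_nonneg fun Y _ => mul_nonneg (G.step_nonneg Z Y) (coverPotential_nonneg hρ₀)
  obtain ⟨B₀, hB₀⟩ := notMem_noMutantSets_iff.1 hZA
  have h𝒮 : (0 : ℝ) < #𝒮 := by exact_mod_cast card_pos.2 ⟨_, B₀.2⟩
  obtain ⟨k, hk⟩ := Nat.exists_eq_add_one.2 (card_pos.2 ⟨B₀, hB₀⟩)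
  rw [← sub_nonneg, G.sum_step_mul_sub_self]
  refine div_nonneg ?_ (G.totalFit_pos Z).le
  rw [Fintype.sum_sum_type]
  simp only [hG.drift_inl_eq_zero hZ, mul_zero, sum_const_zero, zero_add]
  rw [← add_sum_erase _ _ (mem_univ v)]
  have hgain := hG.le_fit_mul_drift_of_notMem hρ₀ hρ₁ hZ ⟨B₀, hB₀⟩ hZ.1
  have hloss : ((Fintype.card U : ℝ) - 1) * -(y * ρ ^ #Z.toLeft) ≤
      ∑ e ∈ univ.erase v, G.fit Z (Sum.inr e) * G.drift (coverPotential ρ v) Z (Sum.inr e) := by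
    calc _ = ∑ _e ∈ univ.erase v, -(y * ρ ^ #Z.toLeft) := by
          rw [sum_const, card_erase_of_mem (mem_univ v), card_univ, nsmul_eq_mul,
            Nat.cast_sub (Fintype.card_pos_iff.2 ⟨v⟩), Nat.cast_one]
      _ ≤ _ := sum_le_sum fun e _ => hG.neg_le_fit_mul_drift hy hρ₀ hρ₁ hZ ⟨B₀, hB₀⟩ e
  have hbalance : ((Fintype.card U : ℝ) - 1) * (y * ρ ^ #Z.toLeft) ≤
      ρ ^ (#Z.toLeft - 1) * (1 - ρ) / #𝒮 := by
    rw [le_div_iff₀ h𝒮, hk, Nat.add_sub_cancel]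
    calc ((Fintype.card U : ℝ) - 1) * (y * ρ ^ (k + 1)) * #𝒮
        = ρ ^ k * (((Fintype.card U : ℝ) - 1) * y * ρ * #𝒮) := by ring
      _ ≤ ρ ^ k * (1 - ρ) := mul_le_mul_of_nonneg_left hρ (pow_nonneg hρ₀ _)
  linarith

lemma absorbProb_pos_of_card_le (hG : IsSetCoverGraph 𝒮 x y G) {j : ℕ} (hZ : Uncovered v Z)
    (hk : #Z.toLeft ≤ j) : 0 < absorbProb G (noMutantSets 𝒮) j Z := by
  have : Nonempty ({A // A ∈ 𝒮} ⊕ U) := ⟨Sum.inr v⟩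
  induction j generalizing Z with
  | zero =>
    have hZA : Z ∈ noMutantSets 𝒮 := fun B hB =>
      (card_pos.2 ⟨B, mem_toLeft.2 hB⟩).ne' (Nat.le_zero.1 hk)
    simp [absorbProb_of_mem _ _ hZA]
  | succ j ih =>
    by_cases hZA : Z ∈ noMutantSets 𝒮
    · simp [absorbProb_of_mem _ _ hZA]
    obtain ⟨B₀, hB₀⟩ := notMem_noMutantSets_iff.1 hZA
    set Z' := Z.erase (Sum.inl B₀)
    have hnext : moranNext Z (Sum.inr v) (Sum.inl B₀) = Z' := if_neg hZ.1
    have hk' : #Z'.toLeft ≤ j := by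
      have : #Z'.toLeft < #Z.toLeft := card_lt_card ⟨fun B => by simp [Z'],
        fun h => by simpa [Z'] using h hB₀⟩
      omega
    have hstep : 0 < stopStep G (noMutantSets 𝒮) Z Z' := by
      rw [stopStep_of_notMem _ _ hZA, ← hnext]
      refine lt_of_lt_of_le ?_ (G.fit_div_mul_w_le_step Z _ _)
      obtain ⟨-, -, hw, -⟩ := hG
      have h𝒮 : (0 : ℝ) < #𝒮 := by exact_mod_cast card_pos.2 ⟨_, B₀.2⟩
      rw [hw]
      exact mul_pos (div_pos (G.fit_pos Z _) (G.totalFit_pos Z)) (by positivity)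
    rw [add_comm, absorbProb_add]
    refine sum_pos' (fun W _ => mul_nonneg (stopStepN_nonneg _ _ _ _ _)
      (absorbProb_nonneg _ _ _ _)) ⟨Z', mem_univ _, ?_⟩
    rw [stopStepN_one]
    exact mul_pos hstep (ih (hZ.erase _) hk')

end IsSetCoverGraph

lemma moranRatio_bounds {n a b y ρ : ℝ} (hn : n = a + b) (ha : 0 ≤ a) (hb : 1 ≤ b)
    (hy : 0 ≤ y) (hρ : ρ = 1 / n / (1 / n + (n - 1) * y)) :
    0 ≤ ρ ∧ ρ ≤ 1 ∧ (b - 1) * y * ρ * a ≤ 1 - ρ := by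
  have hn₀ : 0 < n := by linarith
  have hd : 0 ≤ n * (n - 1) * y := mul_nonneg (mul_nonneg hn₀.le (by linarith)) hy
  replace hρ : ρ = 1 / (1 + n * (n - 1) * y) := by
    rw [hρ]
    field_simp
  have hρ₀ : 0 ≤ ρ := hρ ▸ by positivity
  have hρ₁ : 1 - ρ = n * (n - 1) * y * ρ := by
    rw [hρ]
    field_simp
    ring
  have hcoef : (b - 1) * a ≤ n * (n - 1) := by nlinarith
  refine ⟨hρ₀, by nlinarith, ?_⟩
  rw [hρ₁]
  nlinarith [mul_le_mul_of_nonneg_right hcoef (mul_nonneg hy hρ₀)]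

theorem reach_no_mutant_sets_general {U : Type} [Fintype U] [DecidableEq U]
    (𝒮 : Finset (Finset U)) (x y : ℝ) (hy0 : 0 < y)
    (G : FitnessGraph ({A // A ∈ 𝒮} ⊕ U)) (hG : IsSetCoverGraph 𝒮 x y G)
    (X₁ : Finset ({A // A ∈ 𝒮} ⊕ U)) (v : U)
    (hv : Sum.inr v ∉ X₁) (hvUncov : ∀ A : {A // A ∈ 𝒮}, Sum.inl A ∈ X₁ → v ∉ A.1) :
    ((1 / (Fintype.card ({A // A ∈ 𝒮} ⊕ U) : ℝ)) /
        (1 / (Fintype.card ({A // A ∈ 𝒮} ⊕ U) : ℝ) +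
          ((Fintype.card ({A // A ∈ 𝒮} ⊕ U) : ℝ) - 1) * y)) ^ 𝒮.card ≤
      reachProb G {X₂ | ∀ A : {A // A ∈ 𝒮}, Sum.inl A ∉ X₂} X₁ := by
  have : Nonempty ({A // A ∈ 𝒮} ⊕ U) := ⟨Sum.inr v⟩
  set n : ℝ := (Fintype.card ({A // A ∈ 𝒮} ⊕ U) : ℝ)
  set ρ := 1 / n / (1 / n + (n - 1) * y) with hρ
  obtain ⟨hρ₀, hρ₁, hdrift⟩ := moranRatio_bounds (b := Fintype.card U)
    (by simp [n, Fintype.card_sum]) (Nat.cast_nonneg #𝒮)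
    (by exact_mod_cast Fintype.card_pos_iff.2 ⟨v⟩) hy0.le hρ
  have habs : ∀ Z ∉ noMutantSets 𝒮, 0 < coverPotential ρ v Z →
      0 < absorbProb G (noMutantSets 𝒮) #𝒮 Z := fun Z _ hZ =>
    hG.absorbProb_pos_of_card_le (uncovered_of_coverPotential_ne_zero hZ.ne')
      (by simpa using card_le_univ Z.toLeft)
  calc ρ ^ #𝒮 ≤ coverPotential ρ v X₁ := pow_card_le_coverPotential ⟨hv, hvUncov⟩ hρ₀ hρ₁
    _ ≤ reachProb G (noMutantSets 𝒮) X₁ :=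
      le_reachProb_of_subharmonic G _ _ (fun _ => coverPotential_le_one hρ₀ hρ₁)
        (fun Z hZ => hG.coverPotential_le_sum_step hy0.le hρ₀ hρ₁ hdrift hZ) habs X₁

/-- From any configuration `X₁` containing an uncovered resident element of the universe,
the process reaches a configuration with no mutants in `V₁` with probability at least
`((1/n)/((1/n)+(n−1)y))^{|V₁|}`. -/
theorem reach_no_mutant_sets {U : Type} [Fintype U] [DecidableEq U] [Nonempty U]
    (𝒮 : Finset (Finset U)) (hne : ∀ A ∈ 𝒮, A.Nonempty) (hcov : ∀ e : U, ∃ A ∈ 𝒮, e ∈ A)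
    (x y : ℝ) (hx : 1 ≤ x) (hy0 : 0 < y) (hy1 : y ≤ 1)
    (G : FitnessGraph ({A // A ∈ 𝒮} ⊕ U)) (hG : IsSetCoverGraph 𝒮 x y G)
    (X₁ : Finset ({A // A ∈ 𝒮} ⊕ U)) (v : U)
    (hv : Sum.inr v ∉ X₁) (hvUncov : ∀ A : {A // A ∈ 𝒮}, Sum.inl A ∈ X₁ → v ∉ A.1) :
    ((1 / (Fintype.card ({A // A ∈ 𝒮} ⊕ U) : ℝ)) /
        (1 / (Fintype.card ({A // A ∈ 𝒮} ⊕ U) : ℝ) +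
          ((Fintype.card ({A // A ∈ 𝒮} ⊕ U) : ℝ) - 1) * y)) ^ 𝒮.card ≤
      reachProb G {X₂ | ∀ A : {A // A ∈ 𝒮}, Sum.inl A ∉ X₂} X₁ :=
  reach_no_mutant_sets_general 𝒮 x y hy0 G hG X₁ v hv hvUncov
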